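/- arXiv:1904.07901 — 9 statements merged into one kernel-verified Lean document; each statement's English description precedes it below -/
import Mathlib

section
/- Let $n, m \geq 1$, let $G$ be a group of order $2^n$ that is realizable in characteristic $2^m$, and let $L = \lceil \log_2(n+1) \rceil$. Then the exponent of $G$ is at most $2^{L+m-1}$. -/
def RealizableInChar (G : Type*) [Group G] (m : ℕ) : Prop :=
  ∃ (R : Type) (_ : Ring R) (_ : Fintype R), ringChar R = m ∧ Nonempty (Rˣ ≃* G)

/-!
Let `R` be the finite ring, so `2 ^ m = 0` in `R`, and let `u` be a unit. Since `u ^ 2 ^ n = 1`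
and `2` is nilpotent, `x = u - 1` is nilpotent. If `x ^ (n + 1) ≠ 0`, the lowest power of `x`
in a difference of two distinct subset sums `∑ i ∈ A, x ^ i` with `A ⊆ {1, …, n + 1}` would
absorb all the higher ones and vanish, so these `2 ^ (n + 1)` sums give distinct units
`1 + ∑ i ∈ A, x ^ i`, more than the `2 ^ n` units of `R`. Hence `x ^ 2 ^ L = 0`, and in the binomial expansion of
`(x + 1) ^ 2 ^ (L + m - 1)` every coefficient `choose (2 ^ (L + m - 1)) i` with `0 < i < 2 ^ L`
is divisible by `2 ^ m` (Kummer), so `u ^ 2 ^ (L + m - 1) = 1`.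
-/

open Finset

theorem Nat.Prime.pow_dvd_choose_pow_add_sub_one {p L m i : ℕ} (hp : p.Prime) (hi0 : i ≠ 0)
    (hi : i < p ^ L) : p ^ m ∣ (p ^ (L + m - 1)).choose i := by
  rcases m with _ | m
  · exact one_dvd _
  rw [show L + (m + 1) - 1 = L + m by omega]
  have hfin : FiniteMultiplicity p i :=
    Nat.finiteMultiplicity_iff.2 ⟨hp.ne_one, Nat.pos_of_ne_zero hi0⟩
  have hlt : multiplicity p i < L := by
    rw [hfin.multiplicity_lt_iff_not_dvd]
    exact fun h => (Nat.le_of_dvd (Nat.pos_of_ne_zero hi0) h).not_gt hi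
  apply pow_dvd_of_le_emultiplicity
  rw [hp.emultiplicity_choose_prime_pow (hi.le.trans (Nat.pow_le_pow_right hp.pos (by omega))) hi0]
  exact_mod_cast (by omega : m + 1 ≤ L + m - multiplicity p i)

section Ring

variable {R : Type*} [Ring R] {x : R}

theorem IsNilpotent.pow_eq_zero_of_pow_eq_pow_succ_mul (hx : IsNilpotent x) {w : R} {j : ℕ}
    (h : x ^ j = x ^ (j + 1) * w) : x ^ j = 0 := by
  have key : ∀ t, x ^ j = x ^ (j + t) * w ^ t := by
    intro t
    induction t with
    | zero => simp
    | succ t ih =>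
      calc x ^ j = x ^ t * (x ^ (j + 1) * w) * w ^ t := by
            rw [← h, ← pow_add, ← add_comm j]; exact ih
        _ = x ^ (j + (t + 1)) * w ^ (t + 1) := by
          rw [pow_succ' w, ← mul_assoc (x ^ t), ← pow_add, mul_assoc,
            show t + (j + 1) = j + (t + 1) by omega]
  obtain ⟨k, hk⟩ := hx
  rw [key k, pow_add, hk, mul_zero, zero_mul]

theorem IsNilpotent.pow_eq_zero_of_sum_pow_eq_sum_pow (hx : IsNilpotent x)
    {A B : Finset ℕ} {j : ℕ} (hjA : j ∈ A) (hjB : j ∉ B) (hA : ∀ i ∈ A, j ≤ i) (hB : ∀ i ∈ B, j ≤ i)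
    (heq : ∑ i ∈ A, x ^ i = ∑ i ∈ B, x ^ i) : x ^ j = 0 := by
  have hdvd : ∀ C : Finset ℕ, (∀ i ∈ C, j < i) → ∃ w, ∑ i ∈ C, x ^ i = x ^ (j + 1) * w :=
    fun C hC => ⟨∑ i ∈ C, x ^ (i - (j + 1)), by
      rw [mul_sum]
      exact sum_congr rfl fun i hi => by rw [← pow_add, Nat.add_sub_cancel' (hC i hi)]⟩
  obtain ⟨a, ha⟩ := hdvd (A.erase j) fun i hi =>
    (hA i (mem_of_mem_erase hi)).lt_of_ne' (ne_of_mem_erase hi)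
  obtain ⟨b, hb⟩ := hdvd B fun i hi => (hB i hi).lt_of_ne (fun h => hjB (h ▸ hi))
  refine hx.pow_eq_zero_of_pow_eq_pow_succ_mul (w := b - a) ?_
  rw [mul_sub, ← ha, ← hb, ← heq, ← add_sum_erase A _ hjA, add_sub_cancel_right]

theorem IsNilpotent.injOn_sum_pow (hx : IsNilpotent x) {N : ℕ} (hN : x ^ N ≠ 0) :
    Set.InjOn (fun A : Finset ℕ => ∑ i ∈ A, x ^ i) {A | ∀ i ∈ A, i ≤ N} := by
  classical
  intro A hA B hB heq
  by_contra hne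
  obtain ⟨j, hj, hjmin⟩ := (symmDiff A B).exists_min_image id (symmDiff_nonempty.2 hne)
  have hdiff : ∑ i ∈ A \ B, x ^ i = ∑ i ∈ B \ A, x ^ i := by
    dsimp only at heq
    rw [← sum_inter_add_sum_sdiff A B, ← sum_inter_add_sum_sdiff B A, inter_comm] at heq
    exact add_left_cancel heq
  have hAB : ∀ i ∈ A \ B, j ≤ i := fun i hi => hjmin i (mem_symmDiff.2 (.inl (mem_sdiff.1 hi)))
  have hBA : ∀ i ∈ B \ A, j ≤ i := fun i hi => hjmin i (mem_symmDiff.2 (.inr (mem_sdiff.1 hi)))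
  rcases mem_symmDiff.1 hj with hjA | hjB
  · exact hN <| pow_eq_zero_of_le (hA j hjA.1) <| hx.pow_eq_zero_of_sum_pow_eq_sum_pow
      (mem_sdiff.2 hjA) (fun h => (mem_sdiff.1 h).2 hjA.1) hAB hBA hdiff
  · exact hN <| pow_eq_zero_of_le (hB j hjB.1) <| hx.pow_eq_zero_of_sum_pow_eq_sum_pow
      (mem_sdiff.2 hjB) (fun h => (mem_sdiff.1 h).2 hjB.1) hBA hAB hdiff.symm

theorem IsNilpotent.pow_eq_zero_of_card_units_lt [Fintype R] (hx : IsNilpotent x) {N : ℕ}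
    (hcard : Nat.card Rˣ < 2 ^ N) : x ^ N = 0 := by
  classical
  by_contra hN
  have hunit : ∀ A ∈ (Icc 1 N).powerset, IsUnit (1 + ∑ i ∈ A, x ^ i) := fun A hA =>
    (Commute.isNilpotent_sum
      (fun i hi => hx.pow_of_pos (Nat.one_le_iff_ne_zero.1 (mem_Icc.1 (mem_powerset.1 hA hi)).1))
      fun i j _ _ => Commute.pow_pow_self x i j).isUnit_one_add
  have hinj : Set.InjOn (fun A => 1 + ∑ i ∈ A, x ^ i) ((Icc 1 N).powerset : Set (Finset ℕ)) :=
    fun A hA B hB h => hx.injOn_sum_pow hN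
      (fun i hi => (mem_Icc.1 (mem_powerset.1 hA hi)).2)
      (fun i hi => (mem_Icc.1 (mem_powerset.1 hB hi)).2) (add_left_cancel h)
  have hle := card_le_card_of_injOn _ (t := univ.image ((↑) : Rˣ → R))
    (fun A hA => mem_image.2 ⟨(hunit A hA).unit, mem_univ _, rfl⟩) hinj
  rw [card_image_of_injective _ Units.val_injective, card_powerset, Nat.card_Icc, card_univ,
    add_tsub_cancel_right, ← Nat.card_eq_fintype_card] at hle
  exact hle.not_gt hcard

theorem isNilpotent_sub_one_of_pow_two_pow_eq_one (h2 : IsNilpotent (2 : R)) {k : ℕ} {v : R}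
    (hv : v ^ 2 ^ k = 1) : IsNilpotent (v - 1) := by
  induction k generalizing v with
  | zero => simp_all
  | succ k ih =>
    have hsq : IsNilpotent (v ^ 2 - 1) := ih (by rw [← pow_mul, ← pow_succ']; exact hv)
    have hcomm : Commute (v ^ 2 - 1) (2 * (v - 1)) :=
      (Commute.ofNat_right _ 2).mul_right
        ((((Commute.refl v).pow_left 2).sub_right (Commute.one_right _)).sub_left
          (Commute.one_left _))
    have h2v : IsNilpotent (2 * (v - 1)) := (Commute.ofNat_left 2 _).isNilpotent_mul_right h2
    refine IsNilpotent.of_pow (m := 2) ?_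
    rw [show (v - 1) ^ 2 = (v ^ 2 - 1) - 2 * (v - 1) by noncomm_ring]
    exact hcomm.isNilpotent_sub hsq h2v

theorem add_one_pow_two_pow_eq_one {L m : ℕ} (hx : x ^ 2 ^ L = 0) (h2 : (2 : R) ^ m = 0) :
    (x + 1) ^ 2 ^ (L + m - 1) = 1 := by
  rw [(Commute.one_right x).add_pow, sum_eq_single 0]
  · simp
  · intro i _ hi0
    rcases lt_or_ge i (2 ^ L) with hi | hi
    · obtain ⟨c, hc⟩ := Nat.prime_two.pow_dvd_choose_pow_add_sub_one (m := m) hi0 hi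
      rw [hc, Nat.cast_mul, Nat.cast_pow, Nat.cast_ofNat, h2, zero_mul, mul_zero]
    · rw [pow_eq_zero_of_le hi hx, zero_mul, zero_mul]
  · simp

theorem Units.pow_two_pow_clog_eq_one [Fintype R] {n m : ℕ} (hcard : Nat.card Rˣ = 2 ^ n)
    (h2 : (2 : R) ^ m = 0) (u : Rˣ) : u ^ 2 ^ (Nat.clog 2 (n + 1) + m - 1) = 1 := by
  have hu : (u : R) ^ 2 ^ n = 1 := by
    rw [← Units.val_pow_eq_pow_val, ← hcard, pow_card_eq_one', Units.val_one]
  have hnil : IsNilpotent ((u : R) - 1) := isNilpotent_sub_one_of_pow_two_pow_eq_one ⟨m, h2⟩ hu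
  have hxn : ((u : R) - 1) ^ (n + 1) = 0 :=
    hnil.pow_eq_zero_of_card_units_lt (hcard ▸ Nat.pow_lt_pow_right one_lt_two n.lt_succ_self)
  have hxL : ((u : R) - 1) ^ 2 ^ Nat.clog 2 (n + 1) = 0 :=
    pow_eq_zero_of_le (Nat.le_pow_clog one_lt_two _) hxn
  ext
  simpa using add_one_pow_two_pow_eq_one hxL h2

end Ring

theorem stmt_1_general (n m : ℕ)
    (G : Type*) [Group G] [Fintype G] (hcard : Fintype.card G = 2 ^ n)
    (hreal : RealizableInChar G (2 ^ m)) :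
    Monoid.exponent G ≤ 2 ^ (Nat.clog 2 (n + 1) + m - 1) := by
  obtain ⟨R, _, _, hchar, ⟨e⟩⟩ := hreal
  have h2 : (2 : R) ^ m = 0 := by
    have := ringChar.Nat.cast_ringChar (R := R)
    rwa [hchar, Nat.cast_pow, Nat.cast_ofNat] at this
  have hcardR : Nat.card Rˣ = 2 ^ n := by
    rw [Nat.card_congr e.toEquiv, Nat.card_eq_fintype_card, hcard]
  rw [← Monoid.exponent_eq_of_mulEquiv e]
  exact Nat.le_of_dvd (by positivity)
    (Monoid.exponent_dvd_of_forall_pow_eq_one (Units.pow_two_pow_clog_eq_one hcardR h2))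

/-- If `G` is a group of order `2 ^ n` (with `n ≥ 1`) realizable in characteristic `2 ^ m`
(with `m ≥ 1`), and `L = ⌈log₂ (n + 1)⌉`, then the exponent of `G` is at most
`2 ^ (L + m - 1)`. -/
theorem stmt_1 (n m : ℕ) (hn : 1 ≤ n) (hm : 1 ≤ m)
    (G : Type*) [Group G] [Fintype G] (hcard : Fintype.card G = 2 ^ n)
    (hreal : RealizableInChar G (2 ^ m)) :
    Monoid.exponent G ≤ 2 ^ (Nat.clog 2 (n + 1) + m - 1) :=
  stmt_1_general n m G hcard hreal
end

section
/- Let $G$ be a finite $2$-group. Assume there exists $a \in G$ whose order is at least $8$ and whose centralizer $C_G(a)$ equals the cyclic subgroup $\langle a \rangle$ generated by $a$. Then for every $m \geq 1$, $G$ is not realizable in characteristic $2^m$; that is, there is no finite ring of characteristic $2^m$ whose group of units is isomorphic to $G$. -/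
/-!
Let `R` be a finite ring of characteristic `2 ^ m` with `Rˣ ≃* G`, and let `u` be the unit
corresponding to `a`: it has order `2 ^ e` with `e ≥ 3`, its centralizer in `Rˣ` is `⟨u⟩`, and
`2` is nilpotent in `R`. A cyclic group has at most one involution, so all involutions of `R`
other than `1` that commute with `u` coincide; in particular so do all `1 + b` with `b ≠ 0`
square-zero, killed by `2` and commuting with `u`. For `b` the last nonzero power of `2`,
comparing `-1`, `1 + b` and `1 + b u` gives `b = -2 = b u`, i.e. `2 (u - 1) = 0`. Then
`x = u - 1` satisfies `u ^ 2 ^ j = 1 + x ^ 2 ^ j`, so `x` is nilpotent with `x ^ 4 ≠ 0`. Its two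
highest nonzero powers are then both square-zero, hence equal, which is impossible because
`1 - x` is a unit.
-/

open Subgroup

theorem eq_of_mem_zpowers_of_sq_eq_one {G : Type*} [Group G] {g s t : G}
    (hs : s ∈ zpowers g) (ht : t ∈ zpowers g) (hs2 : s ^ 2 = 1) (ht2 : t ^ 2 = 1)
    (hs1 : s ≠ 1) (ht1 : t ≠ 1) : s = t := by
  obtain ⟨k, rfl⟩ := mem_zpowers_iff.mp hs
  obtain ⟨l, rfl⟩ := mem_zpowers_iff.mp ht
  have odd_multiple : ∀ {k : ℤ}, (g ^ k) ^ 2 = 1 → g ^ k ≠ 1 →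
      ∃ a : ℤ, 2 * k = orderOf g * (2 * a + 1) := by
    intro k hk2 hk1
    obtain ⟨a, ha⟩ := orderOf_dvd_iff_zpow_eq_one (x := g) (i := 2 * k) |>.mpr
      (by rwa [mul_comm, zpow_mul, zpow_two, ← sq])
    rcases Int.even_or_odd' a with ⟨a, rfl | rfl⟩
    · exact absurd (orderOf_dvd_iff_zpow_eq_one.mp ⟨a, by linarith⟩) hk1
    · exact ⟨a, ha⟩
  obtain ⟨a, ha⟩ := odd_multiple hs2 hs1
  obtain ⟨b, hb⟩ := odd_multiple ht2 ht1
  rw [← mul_inv_eq_one, ← zpow_sub]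
  exact orderOf_dvd_iff_zpow_eq_one.mp ⟨a - b, by linarith⟩

theorem two_mul_pow_succ_eq_zero {R : Type*} [Semiring R] {x : R} (hx : 2 * x = 0) (n : ℕ) :
    2 * x ^ (n + 1) = 0 := by
  rw [pow_succ', ← mul_assoc, hx, zero_mul]

theorem one_add_pow_two_pow {R : Type*} [Semiring R] {x : R} (hx : 2 * x = 0) (j : ℕ) :
    (1 + x) ^ 2 ^ j = 1 + x ^ 2 ^ j := by
  induction j with
  | zero => simp
  | succ j ih =>
    obtain ⟨i, hi⟩ := Nat.exists_eq_add_one.mpr (Nat.two_pow_pos j)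
    rw [pow_succ, pow_mul, ih, (Commute.one_left _).add_sq, hi, mul_one,
      two_mul_pow_succ_eq_zero hx, add_zero, one_pow, ← hi, ← pow_mul]

theorem one_add_mul_self_of_mul_self_eq_zero {R : Type*} [Semiring R] {b : R} (hb : b * b = 0)
    (hb2 : 2 * b = 0) : (1 + b) * (1 + b) = 1 := by
  rw [← sq, (Commute.one_left b).add_sq, sq b, hb, mul_one, hb2]
  simp

section CentralizerEqZPowers

variable {R : Type*} [Ring R] {u : Rˣ} (hcent : centralizer {u} = zpowers u)
include hcent

theorem eq_of_mul_self_eq_one_of_commute {s t : R} (hs : s * s = 1) (ht : t * t = 1)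
    (hs1 : s ≠ 1) (ht1 : t ≠ 1) (hsu : Commute s u) (htu : Commute t u) : s = t := by
  let S : Rˣ := ⟨s, s, hs, hs⟩
  let T : Rˣ := ⟨t, t, ht, ht⟩
  have hmem : ∀ {V : Rˣ}, Commute (V : R) u → V ∈ zpowers u := fun hV ↦
    hcent ▸ mem_centralizer_singleton_iff.mpr (Units.ext hV.eq)
  have : S = T := eq_of_mem_zpowers_of_sq_eq_one (hmem hsu) (hmem htu)
    (Units.ext (by simp [S, sq, hs])) (Units.ext (by simp [T, sq, ht]))
    (mt (congrArg Units.val) hs1) (mt (congrArg Units.val) ht1)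
  exact congrArg Units.val this

theorem eq_of_mul_self_eq_zero_of_commute {b c : R} (hb : b * b = 0) (hc : c * c = 0)
    (hb2 : 2 * b = 0) (hc2 : 2 * c = 0) (hb0 : b ≠ 0) (hc0 : c ≠ 0)
    (hbu : Commute b u) (hcu : Commute c u) : b = c :=
  add_left_cancel <| eq_of_mul_self_eq_one_of_commute hcent
    (one_add_mul_self_of_mul_self_eq_zero hb hb2) (one_add_mul_self_of_mul_self_eq_zero hc hc2)
    (by simpa using hb0) (by simpa using hc0)
    ((Commute.one_left _).add_left hbu) ((Commute.one_left _).add_left hcu)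

theorem two_mul_sub_one_eq_zero (hnil : IsNilpotent (2 : R)) : 2 * ((u : R) - 1) = 0 := by
  by_cases h20 : (2 : R) = 0
  · rw [h20, zero_mul]
  have : Nontrivial R := ⟨⟨2, 0, h20⟩⟩
  set N := nilpotencyClass (2 : R)
  have hN : 2 ≤ N := by
    have := pos_nilpotencyClass_iff.mpr hnil
    have : N ≠ 1 := mt nilpotencyClass_eq_one.mp h20
    omega
  set b : R := 2 ^ (N - 1)
  have hb0 : b ≠ 0 := pow_pred_nilpotencyClass hnil
  have hb2 : 2 * b = 0 := by
    rw [← pow_succ', Nat.sub_add_cancel (by omega), pow_nilpotencyClass hnil]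
  have hbb : b * b = 0 := by
    rw [← pow_add]; exact pow_eq_zero_of_le (by omega) (pow_nilpotencyClass hnil)
  have hbu : Commute b u := (Nat.cast_commute 2 _).pow_left _
  have hneg : (-1 : R) * -1 = 1 := by simp
  have hneg1 : (-1 : R) ≠ 1 := by
    intro h
    apply h20
    rw [← one_add_one_eq_two]
    nth_rw 1 [← h]
    simp
  have hbu0 : b * u ≠ 0 := by rwa [Ne, Units.mul_left_eq_zero]
  have hbubu : b * u * (b * u) = 0 := by
    rw [hbu.symm.mul_mul_mul_comm, hbb, zero_mul]
  have hbu2 : 2 * (b * u) = 0 := by rw [← mul_assoc, hb2, zero_mul]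
  have hb_neg : 1 + b = -1 := eq_of_mul_self_eq_one_of_commute hcent
    (one_add_mul_self_of_mul_self_eq_zero hbb hb2) hneg (by simpa using hb0) hneg1
    ((Commute.one_left _).add_left hbu) (Commute.neg_one_left _)
  have hbu_b : b * u = b := eq_of_mul_self_eq_zero_of_commute hcent hbubu hbb hbu2 hb2 hbu0 hb0
    (hbu.mul_left (Commute.refl _)) hbu
  have hb_eq : b = -2 := by rw [eq_sub_of_add_eq' hb_neg]; norm_num
  rw [hb_eq] at hbu_b
  simpa [mul_sub, neg_mul, sub_eq_zero] using hbu_b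

end CentralizerEqZPowers

theorem centralizer_ne_zpowers_of_orderOf_eq_two_pow {R : Type*} [Ring R]
    (hnil : IsNilpotent (2 : R)) {u : Rˣ} {e : ℕ} (hu : orderOf u = 2 ^ e) (he : 3 ≤ e) :
    centralizer {u} ≠ zpowers u := by
  intro hcent
  set x : R := u - 1
  have hx2 : 2 * x = 0 := two_mul_sub_one_eq_zero hcent hnil
  have hpow : ∀ j, ((u ^ 2 ^ j : Rˣ) : R) = 1 + x ^ 2 ^ j := fun j ↦ by
    rw [Units.val_pow_eq_pow_val, ← one_add_pow_two_pow hx2, add_sub_cancel]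
  have hxnil : IsNilpotent x := ⟨2 ^ e, by simpa [← hu, pow_orderOf_eq_one] using hpow e⟩
  have hx4 : x ^ 2 ^ 2 ≠ 0 := by
    intro h
    have h4 : orderOf u ∣ 2 ^ 2 :=
      orderOf_dvd_of_pow_eq_one (Units.ext (by rw [hpow, h, add_zero, Units.val_one]))
    rw [hu, Nat.pow_dvd_pow_iff_le_right one_lt_two] at h4
    omega
  have : Nontrivial R := ⟨⟨_, _, hx4⟩⟩
  have hn : 2 ^ 2 < nilpotencyClass x := by
    by_contra! hle
    exact hx4 (pow_eq_zero_of_le hle (pow_nilpotencyClass hxnil))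
  obtain ⟨k, hk⟩ : ∃ k, nilpotencyClass x = k + 3 := ⟨nilpotencyClass x - 3, by omega⟩
  have hsq : ∀ i, k + 1 ≤ i → x ^ i * x ^ i = 0 := fun i hi ↦ by
    rw [← pow_add]; exact pow_eq_zero_of_le (by omega) (pow_nilpotencyClass hxnil)
  have hne : x ^ (k + 2) ≠ 0 := by simpa [hk] using pow_pred_nilpotencyClass hxnil
  have hne' : x ^ (k + 1) ≠ 0 := fun h ↦ hne (pow_eq_zero_of_le (by omega) h)
  have hxu : Commute x u := (Commute.refl _).sub_left (Commute.one_left _)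
  have heq : x ^ (k + 2) = x ^ (k + 1) := eq_of_mul_self_eq_zero_of_commute hcent
    (hsq _ (by omega)) (hsq _ le_rfl) (two_mul_pow_succ_eq_zero hx2 _)
    (two_mul_pow_succ_eq_zero hx2 _) hne hne' (hxu.pow_left _) (hxu.pow_left _)
  have hzero : x ^ (k + 1) * (1 - x) = 0 := by rw [mul_sub, mul_one, ← pow_succ, heq, sub_self]
  exact hne' (hxnil.isUnit_one_sub.mul_left_eq_zero.mp hzero)

theorem centralizer_singleton_eq_zpowers_of_mulEquiv {G H : Type*} [Group G] [Group H]
    (φ : G ≃* H) (g : G) (h : centralizer {φ g} = zpowers (φ g)) :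
    centralizer {g} = zpowers g := by
  ext x
  simpa [mem_centralizer_singleton_iff, mem_zpowers_iff, ← map_zpow, ← map_mul] using
    SetLike.ext_iff.mp h (φ x)

/-- If a finite 2-group `G` has an element `a` of order at least 8 whose centralizer is
exactly `⟨a⟩`, then `G` is not realizable in characteristic `2 ^ m` for any `m ≥ 1`. -/
theorem stmt_2 (G : Type*) [Group G] [Fintype G]
    (h2 : ∃ n : ℕ, Fintype.card G = 2 ^ n)
    (a : G) (ha : 8 ≤ orderOf a)
    (hcent : Subgroup.centralizer {a} = Subgroup.zpowers a) :
    ∀ m : ℕ, 1 ≤ m → ¬ RealizableInChar G (2 ^ m) := by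
  rintro m - ⟨R, _, _, hchar, ⟨φ⟩⟩
  obtain ⟨n, hn⟩ := h2
  obtain ⟨e, -, he⟩ := (Nat.dvd_prime_pow Nat.prime_two).mp (hn ▸ orderOf_dvd_card)
  have he3 : 3 ≤ e := (Nat.pow_le_pow_iff_right one_lt_two).mp (he ▸ ha)
  have hnil : IsNilpotent (2 : R) := ⟨m, by exact_mod_cast hchar ▸ ringChar.Nat.cast_ringChar⟩
  refine centralizer_ne_zpowers_of_orderOf_eq_two_pow hnil (u := φ.symm a)
    (by rw [MulEquiv.orderOf_eq, he]) he3 ?_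
  exact centralizer_singleton_eq_zpowers_of_mulEquiv φ _ (by rwa [φ.apply_symm_apply])
end

section
/- Let $G$ be a finite group and let $m \geq 2$. If $G$ is realizable in characteristic $m$, then there is an injective group homomorphism from the group of units $(\mathbb{Z}/m\mathbb{Z})^\times$ into the center $Z(G)$ of $G$. -/
open Function

namespace ZMod

variable {R : Type*} [Ring R] {m : ℕ}

theorem commute_ringHom (f : ZMod m →+* R) (a : ZMod m) (r : R) : Commute (f a) r := by
  obtain ⟨k, rfl⟩ := intCast_surjective a
  rw [map_intCast]
  exact Int.cast_commute k r

variable (R m) [CharP R m]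

def unitsToCenterUnits : (ZMod m)ˣ →* Subgroup.center Rˣ :=
  (Units.map (castHom dvd_rfl R : ZMod m →* R)).codRestrict _ fun u =>
    Subgroup.mem_center_iff.mpr fun v =>
      Units.ext (commute_ringHom (castHom dvd_rfl R) u v).symm.eq

theorem unitsToCenterUnits_injective : Injective (unitsToCenterUnits R m) :=
  fun _ _ h => Units.ext <| castHom_injective R <|
    congr_arg (fun u : Subgroup.center Rˣ => ((u : Rˣ) : R)) h

end ZMod

theorem stmt_3_general (G : Type*) [Group G] (m : ℕ)
    (hreal : RealizableInChar G m) :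
    ∃ f : (ZMod m)ˣ →* Subgroup.center G, Function.Injective f := by
  obtain ⟨R, _, _, hchar, ⟨e⟩⟩ := hreal
  have : CharP R m := hchar ▸ ringChar.charP R
  exact ⟨(Subgroup.centerCongr e).toMonoidHom.comp (ZMod.unitsToCenterUnits R m),
    (Subgroup.centerCongr e).injective.comp (ZMod.unitsToCenterUnits_injective R m)⟩

/-- If a finite group `G` is realizable in characteristic `m ≥ 2`, then `(ℤ/mℤ)ˣ` embeds
into the center of `G`. -/
theorem stmt_3 (G : Type*) [Group G] [Fintype G] (m : ℕ) (hm : 2 ≤ m)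
    (hreal : RealizableInChar G m) :
    ∃ f : (ZMod m)ˣ →* Subgroup.center G, Function.Injective f :=
  stmt_3_general G m hreal
end

section
/- Let $G$ be a finite group. Then the set of integers $m \geq 2$ such that $G$ is realizable in characteristic $m$ is finite. -/
open Nat

lemma Nat.prime_pow_le_totient_sq {p : ℕ} (hp : p.Prime) (hp2 : p ≠ 2) (k : ℕ) :
    p ^ k ≤ φ (p ^ k) ^ 2 := by
  cases k with
  | zero => simp
  | succ k =>
    have hp3 : 3 ≤ p := hp.two_le.lt_of_ne' hp2
    have hp_le : p ≤ (p - 1) ^ 2 := by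
      obtain ⟨c, rfl⟩ := Nat.exists_eq_add_of_le hp3
      rw [show 3 + c - 1 = 2 + c by omega]
      nlinarith
    calc p ^ (k + 1) = p ^ k * p := pow_succ p k
      _ ≤ p ^ (k * 2) * (p - 1) ^ 2 :=
          Nat.mul_le_mul (Nat.pow_le_pow_right hp.pos (by omega)) hp_le
      _ = φ (p ^ (k + 1)) ^ 2 := by rw [totient_prime_pow_succ hp, mul_pow, ← pow_mul]

lemma Nat.two_pow_le_two_mul_totient_sq (k : ℕ) : 2 ^ k ≤ 2 * φ (2 ^ k) ^ 2 := by
  cases k with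
  | zero => simp
  | succ k =>
    rw [totient_prime_pow_succ prime_two, show 2 - 1 = 1 from rfl, mul_one, ← pow_mul,
      ← pow_succ']
    exact Nat.pow_le_pow_right two_pos (by omega)

lemma Nat.le_totient_sq_of_odd {n : ℕ} (hn : Odd n) : n ≤ φ n ^ 2 := by
  induction n using Nat.recOnPosPrimePosCoprime with
  | prime_pow p k hp _ =>
    refine prime_pow_le_totient_sq hp ?_ k
    rintro rfl
    exact (Nat.not_odd_iff_even.mpr (Nat.even_pow.mpr ⟨even_two, by omega⟩)) hn
  | zero => simp at hn
  | one => simp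
  | coprime a b _ _ hab iha ihb =>
    rw [Nat.odd_mul] at hn
    rw [totient_mul hab, mul_pow]
    exact Nat.mul_le_mul (iha hn.1) (ihb hn.2)

lemma Nat.le_two_mul_totient_sq {n : ℕ} (hn : n ≠ 0) : n ≤ 2 * φ n ^ 2 := by
  obtain ⟨k, m, hm, rfl⟩ := exists_eq_two_pow_mul_odd hn
  have hcop : Coprime (2 ^ k) m := (Nat.coprime_two_left.mpr hm).pow_left k
  calc 2 ^ k * m ≤ (2 * φ (2 ^ k) ^ 2) * φ m ^ 2 :=
        Nat.mul_le_mul (two_pow_le_two_mul_totient_sq k) (le_totient_sq_of_odd hm)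
    _ = 2 * φ (2 ^ k * m) ^ 2 := by rw [totient_mul hcop]; ring

lemma CharP.totient_le_card_units (R : Type*) [Ring R] [Finite Rˣ] (m : ℕ) [CharP R m] :
    φ m ≤ Nat.card Rˣ := by
  rcases eq_or_ne m 0 with rfl | hm
  · simp
  have : NeZero m := ⟨hm⟩
  rw [← ZMod.card_units_eq_totient m, ← Nat.card_eq_fintype_card]
  exact Nat.card_le_card_of_injective _ (Units.map_injective (ZMod.castHom_injective R))

theorem stmt_4_general (G : Type*) [Group G] :
    {m : ℕ | 2 ≤ m ∧ RealizableInChar G m}.Finite := by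
  refine (Set.finite_Iic (2 * Nat.card G ^ 2)).subset ?_
  rintro m ⟨hm, R, _, _, hchar, ⟨e⟩⟩
  have : CharP R m := hchar ▸ ringChar.charP R
  have hφ : φ m ≤ Nat.card G := Nat.card_congr e.toEquiv ▸ CharP.totient_le_card_units R m
  calc m ≤ 2 * φ m ^ 2 := le_two_mul_totient_sq (by omega)
    _ ≤ 2 * Nat.card G ^ 2 := by gcongr

/-- For a finite group `G`, there are only finitely many `m ≥ 2` in which `G` is
realizable. -/
theorem stmt_4 (G : Type*) [Group G] [Fintype G] :
    {m : ℕ | 2 ≤ m ∧ RealizableInChar G m}.Finite :=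
  stmt_4_general G
end

section
/- Let $G$ be a finite group and let $m \geq 2$. If $G$ is realizable in characteristic $m$, then there exists a two-sided ideal $I$ of the group ring $\mathbb{Z}_m[G]$ such that the group of units of the quotient ring $\mathbb{Z}_m[G]/I$ is isomorphic to $G$. -/
open Function

theorem Units.map_bijective_of_injective {M N : Type*} [Monoid M] [Monoid N] {f : M →* N}
    (hf : Injective f) (hunits : ∀ u : Nˣ, (u : N) ∈ Set.range f) :
    Bijective (Units.map f) := by
  refine ⟨Units.map_injective hf, fun u => ?_⟩
  obtain ⟨a, ha⟩ := hunits u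
  obtain ⟨b, hb⟩ := hunits u⁻¹
  have hab : a * b = 1 := hf (by simp [ha, hb])
  have hba : b * a = 1 := hf (by simp [ha, hb])
  exact ⟨⟨a, b, hab, hba⟩, Units.ext ha⟩

theorem MonoidAlgebra.range_lift_subset {k G R : Type*} [CommSemiring k] [Monoid G]
    [Semiring R] [Algebra k R] (f : G →* R) :
    Set.range f ⊆ Set.range (MonoidAlgebra.lift k R G f) := by
  rintro _ ⟨g, rfl⟩
  exact ⟨MonoidAlgebra.single g 1, by simp [MonoidAlgebra.lift_single]⟩

noncomputable def TwoSidedIdeal.unitsQuotientKerEquiv {A R : Type*} [Ring A] [Ring R]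
    (φ : A →+* R) (hunits : ∀ u : Rˣ, (u : R) ∈ Set.range φ) :
    (TwoSidedIdeal.ker φ).ringCon.Quotientˣ ≃* Rˣ :=
  MulEquiv.ofBijective (Units.map (RingCon.kerLift φ).toMonoidHom)
    (Units.map_bijective_of_injective (RingCon.kerLift_injective φ) fun u =>
      let ⟨a, ha⟩ := hunits u; ⟨a, ha⟩)

theorem stmt_5_general (G : Type*) [Group G] (m : ℕ)
    (hreal : RealizableInChar G m) :
    ∃ I : TwoSidedIdeal (MonoidAlgebra (ZMod m) G),
      Nonempty ((I.ringCon.Quotient)ˣ ≃* G) := by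
  obtain ⟨R, _, _, hchar, ⟨e⟩⟩ := hreal
  have : CharP R m := hchar ▸ ringChar.charP R
  let : Algebra (ZMod m) R := ZMod.algebra R m
  let f : G →* R := (Units.coeHom R).comp e.symm.toMonoidHom
  let φ := (MonoidAlgebra.lift (ZMod m) R G f).toRingHom
  have hunits : ∀ u : Rˣ, (u : R) ∈ Set.range φ := fun u =>
    MonoidAlgebra.range_lift_subset f ⟨e u, by simp [f]⟩
  exact ⟨TwoSidedIdeal.ker φ, ⟨(TwoSidedIdeal.unitsQuotientKerEquiv φ hunits).trans e⟩⟩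

/-- If a finite group `G` is realizable in characteristic `m ≥ 2`, then there is a
two-sided ideal `I` of the group ring `(ℤ/mℤ)[G]` such that the group of units of the
quotient ring `(ℤ/mℤ)[G]/I` is isomorphic to `G`. -/
theorem stmt_5 (G : Type*) [Group G] [Fintype G] (m : ℕ) (hm : 2 ≤ m)
    (hreal : RealizableInChar G m) :
    ∃ I : TwoSidedIdeal (MonoidAlgebra (ZMod m) G),
      Nonempty ((I.ringCon.Quotient)ˣ ≃* G) :=
  stmt_5_general G m hreal
end

section
/- Let $G$ be a finite $2$-group, let $U$ be the group of units of the group ring $\mathbb{Z}_2[G]$, and identify $G$ with its image in $U$ under the canonical embedding $g \mapsto g$. Suppose $N$ is a normal subgroup of $U$ with $U = GN$ and $G \cap N = \{1\}$, and suppose the set $1 + N = \{1 + n : n \in N\}$ is a two-sided ideal of $\mathbb{Z}_2[G]$. Then $G$ is realizable in characteristic $2$; that is, there exists a finite ring of characteristic $2$ whose group of units is isomorphic to $G$. -/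
/-- The canonical embedding of a group `G` into the unit group of its group ring
`𝔽₂[G]`, sending `g` to the corresponding unit. -/
noncomputable def canonicalEmbedding (G : Type*) [Group G] :
    G →* (MonoidAlgebra (ZMod 2) G)ˣ :=
  (Units.map (MonoidAlgebra.of (ZMod 2) G)).comp toUnits.toMonoidHom

/-!
Let `I = 1 + N`. In characteristic 2 a unit `u` satisfies `u ≡ 1 (mod I)` iff `u + 1 ∈ 1 + N`,
i.e. iff `u ∈ N`; and every element of `1 + I = N` is a unit, so units of `𝔽₂[G] ⧸ I` lift to
units of `𝔽₂[G]`. Hence reduction mod `I` maps `U` onto `(𝔽₂[G] ⧸ I)ˣ` with kernel `N`, and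
since `G` is a complement of `N` it maps `G` isomorphically onto the units of the finite
characteristic-2 ring `𝔽₂[G] ⧸ I`.
-/

theorem RealizableInChar.of_mulEquiv {G : Type*} [Group G] {m : ℕ} {R : Type*} [Ring R]
    [Finite R] (hR : ringChar R = m) (e : Rˣ ≃* G) : RealizableInChar G m := by
  let f : Shrink.{0} R ≃+* R := Shrink.ringEquiv.{0} R
  have : CharP (Shrink.{0} R) m :=
    hR ▸ charP_of_injective_ringHom (f := f.symm.toRingHom) f.symm.injective _
  exact ⟨Shrink.{0} R, inferInstance, Fintype.ofFinite _, ringChar.eq _ m,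
    ⟨(Units.mapEquiv f.toMulEquiv).trans e⟩⟩

theorem ringChar_eq_of_algebra_zmod (p : ℕ) [Fact p.Prime] (R : Type*) [Ring R]
    [Algebra (ZMod p) R] [Nontrivial R] : ringChar R = p :=
  have := charP_of_injective_algebraMap' (ZMod p) (A := R) p
  ringChar.eq R p

theorem isUnit_of_isUnit_mul_of_isUnit_mul {M : Type*} [Monoid M] {a b : M}
    (hab : IsUnit (a * b)) (hba : IsUnit (b * a)) : IsUnit a := by
  obtain ⟨u, hu⟩ := hab
  obtain ⟨v, hv⟩ := hba
  have hright : a * (b * ↑u⁻¹) = 1 := by rw [← mul_assoc, ← hu, Units.mul_inv]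
  have hleft : (↑v⁻¹ * b) * a = 1 := by rw [mul_assoc, ← hv, Units.inv_mul]
  have hinv : ↑v⁻¹ * b = b * ↑u⁻¹ := left_inv_eq_right_inv hleft hright
  exact ⟨⟨a, b * ↑u⁻¹, hright, hinv ▸ hleft⟩, rfl⟩

section UnitsOfSurjective

variable {A B : Type*} [Ring A] [Ring B] (f : A →+* B)

theorem RingHom.nontrivial_of_isUnit_of_map_eq_one [Nontrivial A]
    (hf : ∀ x, f x = 1 → IsUnit x) : Nontrivial B :=
  ⟨⟨0, 1, fun h => not_isUnit_zero (hf 0 (by rw [map_zero, h]))⟩⟩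

theorem RingHom.units_map_surjective (hsurj : Function.Surjective f)
    (hf : ∀ x, f x = 1 → IsUnit x) : Function.Surjective (Units.map (f : A →* B)) := by
  intro v
  obtain ⟨a, ha⟩ := hsurj v
  obtain ⟨b, hb⟩ := hsurj ↑v⁻¹
  have ha' : IsUnit a := isUnit_of_isUnit_mul_of_isUnit_mul (b := b)
    (hf _ (by rw [map_mul, ha, hb, Units.mul_inv])) (hf _ (by rw [map_mul, ha, hb, Units.inv_mul]))
  exact ⟨ha'.unit, Units.ext ha⟩

end UnitsOfSurjective

theorem MonoidHom.bijective_comp_of_isComplement {G U V : Type*} [Group G] [Group U] [Group V]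
    {ι : G →* U} (hι : Function.Injective ι) {f : U →* V} (hf : Function.Surjective f)
    {N : Subgroup U} (hker : f.ker = N) (hspan : ∀ u, ∃ g ∈ ι.range, ∃ x ∈ N, u = g * x)
    (hdisj : ι.range ⊓ N = ⊥) : Function.Bijective (f.comp ι) := by
  refine ⟨(injective_iff_map_eq_one _).2 fun g hg => hι ?_, fun v => ?_⟩
  · have : ι g ∈ ι.range ⊓ N := ⟨⟨g, rfl⟩, hker ▸ hg⟩
    rw [hdisj, Subgroup.mem_bot] at this
    rw [this, map_one]
  · obtain ⟨u, rfl⟩ := hf v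
    obtain ⟨_, ⟨g, rfl⟩, x, hx, rfl⟩ := hspan u
    refine ⟨g, ?_⟩
    rw [← hker] at hx
    simpa using hx

theorem TwoSidedIdeal.mk'_eq_one_iff_of_charTwo {A : Type*} [Ring A] [CharP A 2]
    {N : Subgroup Aˣ} {I : TwoSidedIdeal A} (hI : ∀ x, x ∈ I ↔ ∃ u ∈ N, x = 1 + (u : A))
    (x : A) : I.ringCon.mk' x = 1 ↔ ∃ u ∈ N, x = u := by
  rw [← sub_eq_zero, ← map_one I.ringCon.mk', ← map_sub, ← mem_ker, ker_ringCon_mk', hI,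
    CharTwo.sub_eq_add, add_comm]
  simp only [add_right_inj]

theorem canonicalEmbedding_injective (G : Type*) [Group G] :
    Function.Injective (canonicalEmbedding G) :=
  fun _ _ h => MonoidAlgebra.of_injective (congrArg Units.val h)

theorem stmt_10_general (G : Type*) [Group G] [Fintype G]
    (N : Subgroup (MonoidAlgebra (ZMod 2) G)ˣ)
    (hGN : ∀ u : (MonoidAlgebra (ZMod 2) G)ˣ,
      ∃ g ∈ (canonicalEmbedding G).range, ∃ x ∈ N, u = g * x)
    (hGcapN : (canonicalEmbedding G).range ⊓ N = ⊥)
    (hideal : ∃ I : TwoSidedIdeal (MonoidAlgebra (ZMod 2) G),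
      ∀ x : MonoidAlgebra (ZMod 2) G,
        x ∈ I ↔ ∃ u ∈ N, x = 1 + (u : MonoidAlgebra (ZMod 2) G)) :
    RealizableInChar G 2 := by
  classical
  obtain ⟨I, hI⟩ := hideal
  have : CharP (MonoidAlgebra (ZMod 2) G) 2 := charP_of_injective_algebraMap' (ZMod 2) 2
  have : Finite (MonoidAlgebra (ZMod 2) G) := .of_equiv _ MonoidAlgebra.coeffEquiv.symm
  let π := I.ringCon.mk'
  have hπ : ∀ x, π x = 1 ↔ ∃ u ∈ N, x = u := I.mk'_eq_one_iff_of_charTwo hI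
  have hunit (x) (hx : π x = 1) : IsUnit x := by
    obtain ⟨u, -, rfl⟩ := (hπ x).1 hx
    exact u.isUnit
  have hker : (Units.map (π : _ →* I.ringCon.Quotient)).ker = N := by
    ext u
    rw [MonoidHom.mem_ker, Units.ext_iff]
    simpa [Units.val_inj] using hπ u
  have hsurj : Function.Surjective π := RingCon.mk'_surjective _
  have := π.nontrivial_of_isUnit_of_map_eq_one hunit
  have := Finite.of_surjective π hsurj
  exact .of_mulEquiv (ringChar_eq_of_algebra_zmod 2 _) (MulEquiv.ofBijective _
    (MonoidHom.bijective_comp_of_isComplement (canonicalEmbedding_injective G)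
      (π.units_map_surjective hsurj hunit) hker hGN hGcapN)).symm

/-- Let `G` be a finite 2-group, identified with its image in the unit group `U` of
`𝔽₂[G]`.  If `N` is a normal complement of `G` in `U` (i.e. `N ⊴ U`, `U = GN`, and
`G ∩ N = 1`) such that `1 + N` is a two-sided ideal of `𝔽₂[G]`, then `G` is realizable
in characteristic 2. -/
theorem stmt_10 (G : Type*) [Group G] [Fintype G]
    (h2 : ∃ n : ℕ, Fintype.card G = 2 ^ n)
    (N : Subgroup (MonoidAlgebra (ZMod 2) G)ˣ) (hN : N.Normal)
    (hGN : ∀ u : (MonoidAlgebra (ZMod 2) G)ˣ,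
      ∃ g ∈ (canonicalEmbedding G).range, ∃ x ∈ N, u = g * x)
    (hGcapN : (canonicalEmbedding G).range ⊓ N = ⊥)
    (hideal : ∃ I : TwoSidedIdeal (MonoidAlgebra (ZMod 2) G),
      ∀ x : MonoidAlgebra (ZMod 2) G,
        x ∈ I ↔ ∃ u ∈ N, x = 1 + (u : MonoidAlgebra (ZMod 2) G)) :
    RealizableInChar G 2 :=
  stmt_10_general G N hGN hGcapN hideal
end

section
/- Let $t$ be an indeterminate, let $N \geq 2$, and let $k \geq 1$ be odd. Let $I$ be the ideal of the polynomial ring $\mathbb{Z}_2[t]$ generated by $1 + t^{2^N}$ and $1 + t + t^2 + t^k$, and let $R = \mathbb{Z}_2[t]/I$. If $k \equiv 1 \pmod 4$, then the image of $t$ in $R$ satisfies $t^2 = 1$; and if $k \equiv 3 \pmod 4$, then the image of $t$ in $R$ satisfies $t^4 = 1$. -/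
/-!
Write `u = t + 1`. In characteristic 2, `u ^ 2 ^ N = 1 + t ^ 2 ^ N`, so `u` is nilpotent in `R`,
and `t ^ (4m) + 1 = (t ^ m + 1) ^ 4` is divisible by `u ^ 4`. For `k = 4m + 1` the second
generator gives `u ^ 2 = t (t ^ (4m) + 1)`, and for `k = 4m + 3` it gives
`u ^ 3 = t ^ 3 (t ^ (4m) + 1)`. Either way `u ^ j` is a multiple of `u ^ (j + 1)`, so `u ^ j` times
the unit `1 - u c` vanishes and `u ^ j = 0`, i.e. `t ^ 2 = 1`, resp. `t ^ 4 = 1`.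
-/

open Polynomial

section CommRing

variable {R : Type*} [CommRing R]

theorem eq_zero_of_mul_dvd_of_isNilpotent {u a : R} (hu : IsNilpotent u) (h : u * a ∣ a) :
    a = 0 := by
  obtain ⟨c, hc⟩ := h
  have hunit : IsUnit (1 - u * c) :=
    ((Commute.all u c).isNilpotent_mul_right hu).isUnit_one_sub
  exact hunit.mul_left_eq_zero.mp (by linear_combination hc)

variable [CharP R 2]

theorem add_one_pow_four_dvd_pow_four_mul_add_one (x : R) (m : ℕ) :
    (x + 1) ^ 4 ∣ x ^ (4 * m) + 1 := by
  obtain ⟨g, hg⟩ := sub_one_dvd_pow_sub_one x m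
  rw [CharTwo.sub_eq_add, CharTwo.sub_eq_add] at hg
  refine ⟨g ^ 4, ?_⟩
  calc x ^ (4 * m) + 1 = (x ^ m + 1) ^ 2 ^ 2 := by
        rw [add_pow_char_pow, one_pow, ← pow_mul']; norm_num
    _ = (x + 1) ^ 4 * g ^ 4 := by rw [hg]; ring

theorem add_one_pow_eq_zero_of_eq_mul {x y : R} {j : ℕ} (hx : IsNilpotent (x + 1)) (hj : j ≤ 3)
    (m : ℕ) (h : (x + 1) ^ j = y * (x ^ (4 * m) + 1)) : (x + 1) ^ j = 0 := by
  refine eq_zero_of_mul_dvd_of_isNilpotent hx ?_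
  rw [← pow_succ', h]
  exact (pow_dvd_pow _ (by omega)).trans
    ((add_one_pow_four_dvd_pow_four_mul_add_one x m).mul_left y)

theorem sq_eq_one_of_isNilpotent_add_one {x : R} (hx : IsNilpotent (x + 1)) (m : ℕ)
    (h : 1 + x + x ^ 2 + x ^ (4 * m + 1) = 0) : x ^ 2 = 1 := by
  have hsq : (x + 1) ^ 2 = 0 := add_one_pow_eq_zero_of_eq_mul hx (by norm_num) m
    (y := x) (by linear_combination h - x ^ (4 * m + 1) * CharTwo.two_eq_zero (R := R))
  linear_combination hsq - (x + 1) * CharTwo.two_eq_zero (R := R)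

theorem pow_four_eq_one_of_isNilpotent_add_one {x : R} (hx : IsNilpotent (x + 1)) (m : ℕ)
    (h : 1 + x + x ^ 2 + x ^ (4 * m + 3) = 0) : x ^ 4 = 1 := by
  have hcube : (x + 1) ^ 3 = 0 := add_one_pow_eq_zero_of_eq_mul hx le_rfl m (y := x ^ 3)
    (by linear_combination h + (x ^ 2 + x - x ^ (4 * m + 3)) * CharTwo.two_eq_zero (R := R))
  linear_combination (x + 1) * hcube -
    (2 * x ^ 3 + 3 * x ^ 2 + 2 * x + 1) * CharTwo.two_eq_zero (R := R)

end CommRing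

theorem stmt_16_general (N k : ℕ)
    (I : Ideal (Polynomial (ZMod 2)))
    (hI : I = Ideal.span {1 + Polynomial.X ^ 2 ^ N,
      1 + Polynomial.X + Polynomial.X ^ 2 + Polynomial.X ^ k}) :
    (k % 4 = 1 → (Ideal.Quotient.mk I Polynomial.X) ^ 2 = 1) ∧
    (k % 4 = 3 → (Ideal.Quotient.mk I Polynomial.X) ^ 4 = 1) := by
  nontriviality (ZMod 2)[X] ⧸ I
  have : CharP ((ZMod 2)[X] ⧸ I) 2 := charP_of_injective_algebraMap' (ZMod 2) 2
  have hgen : ∀ p ∈ ({1 + X ^ 2 ^ N, 1 + X + X ^ 2 + X ^ k} : Set (ZMod 2)[X]),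
      Ideal.Quotient.mk I p = 0 := fun p hp ↦
    Ideal.Quotient.eq_zero_iff_mem.mpr (hI ▸ Ideal.subset_span hp)
  set x := Ideal.Quotient.mk I X
  have hnil : IsNilpotent (x + 1) := ⟨2 ^ N, by
    rw [add_pow_char_pow, one_pow, add_comm]; simpa using hgen _ (Set.mem_insert _ _)⟩
  have hrel : 1 + x + x ^ 2 + x ^ k = 0 := by simpa using hgen _ (Set.mem_insert_of_mem _ rfl)
  rw [← Nat.div_add_mod k 4] at hrel
  refine ⟨fun hk ↦ ?_, fun hk ↦ ?_⟩
  · exact sq_eq_one_of_isNilpotent_add_one hnil _ (hk ▸ hrel)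
  · exact pow_four_eq_one_of_isNilpotent_add_one hnil _ (hk ▸ hrel)

/-- Let `N ≥ 2`, let `k ≥ 1` be odd, let `I` be the ideal of `𝔽₂[t]` generated by
`1 + t^(2^N)` and `1 + t + t² + t^k`, and let `R = 𝔽₂[t]/I`.  If `k ≡ 1 (mod 4)` then
the image of `t` in `R` satisfies `t² = 1`, and if `k ≡ 3 (mod 4)` then it satisfies
`t⁴ = 1`. -/
theorem stmt_16 (N k : ℕ) (hN : 2 ≤ N) (hk : 1 ≤ k) (hodd : Odd k)
    (I : Ideal (Polynomial (ZMod 2)))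
    (hI : I = Ideal.span {1 + Polynomial.X ^ 2 ^ N,
      1 + Polynomial.X + Polynomial.X ^ 2 + Polynomial.X ^ k}) :
    (k % 4 = 1 → (Ideal.Quotient.mk I Polynomial.X) ^ 2 = 1) ∧
    (k % 4 = 3 → (Ideal.Quotient.mk I Polynomial.X) ^ 4 = 1) :=
  stmt_16_general N k I hI
end

section
/- Let $G$ be a finite $2$-group. For $a \in G$, let $N_a$ denote the smallest non-negative integer $N$ such that $b^{2^N} \in \langle a \rangle$ for all $b$ in the centralizer $C_G(a)$ (i.e., $2^{N_a}$ is the exponent of $C_G(a)/\langle a \rangle$). Assume there exists $a \in G$ such that one of the following holds: (i) $N_a = 0$ and the order of $a$ is at least $8$; (ii) $N_a = 1$ and the order of $a$ is at least $16$; (iii) $N_a \geq 2$ and the order of $a$ is at least $2^{2N_a + 1}$. Then $G$ is not realizable in characteristic $2$; that is, there is no finite ring of characteristic $2$ whose group of units is isomorphic to $G$. -/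
section

variable {R : Type*} [Ring R]

theorem IsNilpotent.pow_eq_zero_of_pow_eq_pow_mul {x c : R} (hx : IsNilpotent x)
    (hc : Commute x c) {p q : ℕ} (hpq : p < q) (h : x ^ p = x ^ q * c) : x ^ p = 0 := by
  have hnil : IsNilpotent (x ^ (q - p) * c) :=
    (hc.pow_left _).isNilpotent_mul_right (hx.pow_of_pos (by omega))
  have hzero : x ^ p * (1 - x ^ (q - p) * c) = 0 := by
    rw [mul_sub, mul_one, ← mul_assoc, ← pow_add, Nat.add_sub_cancel' hpq.le, ← h, sub_self]
  exact hnil.isUnit_one_sub.mul_left_eq_zero.mp hzero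

theorem IsNilpotent.pow_eq_zero_of_pow_eq_pow_mul_unit {x : R} (hx : IsNilpotent x)
    {w : Rˣ} (hw : Commute x w) {p q : ℕ} (hpq : p ≠ q) (h : x ^ p = x ^ q * w) :
    x ^ p = 0 := by
  rcases hpq.lt_or_gt with hlt | hgt
  · exact hx.pow_eq_zero_of_pow_eq_pow_mul hw hlt h
  · have hq : x ^ q = x ^ p * ↑w⁻¹ := by rw [h, Units.mul_inv_cancel_right]
    rw [h, hx.pow_eq_zero_of_pow_eq_pow_mul hw.units_inv_right hgt hq, zero_mul]

theorem exists_one_add_pow_eq_add_mul_sq (y : R) (m : ℕ) :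
    ∃ D : R, (∀ z : R, Commute z y → Commute z D) ∧
      (1 + y) ^ m = 1 + m * y + D * y ^ 2 := by
  induction m with
  | zero => exact ⟨0, fun z _ => Commute.zero_right z, by simp⟩
  | succ m ih =>
    obtain ⟨D, hD, hEq⟩ := ih
    refine ⟨m + D + D * y, fun z hz => ?_, ?_⟩
    · exact ((Nat.cast_commute m z).symm.add_right (hD z hz)).add_right
        ((hD z hz).mul_right hz)
    · rw [pow_succ, hEq]
      push_cast
      noncomm_ring

theorem IsNilpotent.exists_one_add_pow_sub_one_eq_mul_unit {y : R} (hy : IsNilpotent y)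
    {m : ℕ} (hm : IsUnit (m : R)) :
    ∃ w : Rˣ, (∀ z : R, Commute z y → Commute z w) ∧ (1 + y) ^ m - 1 = y * w := by
  obtain ⟨D, hD, hexp⟩ := exists_one_add_pow_eq_add_mul_sq y m
  have hDy : Commute D y := (hD y (Commute.refl y)).symm
  have hunit : IsUnit ((m : R) + D * y) :=
    (hDy.isNilpotent_mul_left hy).isUnit_add_left_of_commute hm (Nat.cast_commute m _).symm
  refine ⟨hunit.unit, fun z hz => ?_, ?_⟩
  · rw [hunit.unit_spec]
    exact (Nat.cast_commute m z).symm.add_right ((hD z hz).mul_right hz)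
  · rw [hunit.unit_spec, hexp, mul_add, ← (Nat.cast_commute m y).eq, ← mul_assoc, ← hDy.eq,
      mul_assoc, ← sq]
    abel


theorem sub_one_pow_expChar_pow_eq_zero_iff (p : ℕ) [ExpChar R p]
    (u : Rˣ) (n : ℕ) : ((u : R) - 1) ^ p ^ n = 0 ↔ orderOf u ∣ p ^ n := by
  rw [sub_pow_expChar_pow_of_commute _ _ (Commute.one_right _), one_pow, sub_eq_zero,
    orderOf_dvd_iff_pow_eq_one, ← Units.val_pow_eq_pow_val, Units.val_eq_one]

theorem Units.sub_one_pow_ne_zero_of_le (p : ℕ) [Fact p.Prime]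
    [CharP R p] (u : Rˣ) {k d : ℕ} (hu : orderOf u = p ^ k) (hk : 0 < k)
    (hd : d ≤ p ^ (k - 1)) : ((u : R) - 1) ^ d ≠ 0 := by
  intro h
  have hdvd := (sub_one_pow_expChar_pow_eq_zero_iff p u (k - 1)).mp (pow_eq_zero_of_le hd h)
  rw [hu, Nat.pow_dvd_pow_iff_le_right (Fact.out : p.Prime).one_lt] at hdvd
  omega

theorem exists_pow_two_pow_mul_sub_one_eq_mul_unit [CharP R 2] {u : R}
    (hu : IsNilpotent (u - 1)) (r : ℕ) {m : ℕ} (hm : Odd m) :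
    ∃ w : Rˣ, Commute (u - 1) w ∧ u ^ (2 ^ r * m) - 1 = (u - 1) ^ 2 ^ r * w := by
  have : Fact (Nat.Prime 2) := ⟨Nat.prime_two⟩
  have hur : u ^ 2 ^ r = 1 + (u - 1) ^ 2 ^ r := by
    rw [sub_pow_expChar_pow_of_commute 2 r (Commute.one_right _), one_pow, add_sub_cancel]
  have hm1 : IsUnit (m : R) := by
    rw [natCast_eq_one_of_odd_of_two_eq_zero hm CharTwo.two_eq_zero]
    exact isUnit_one
  obtain ⟨w, hwx, hw⟩ :=
    (hu.pow_of_pos (pow_ne_zero r two_ne_zero)).exists_one_add_pow_sub_one_eq_mul_unit hm1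
  exact ⟨w, hwx _ ((Commute.refl _).pow_right _), by rw [pow_mul, hur, hw]⟩

theorem Units.exists_commute_pow_two_pow_notMem_zpowers [CharP R 2]
    (u : Rˣ) {k N : ℕ} (hu : orderOf u = 2 ^ k) (hNk : N + 3 ≤ k) :
    ∃ v : Rˣ, Commute v u ∧ v ^ 2 ^ N ∉ Subgroup.zpowers u := by
  have : Fact (Nat.Prime 2) := ⟨Nat.prime_two⟩
  set x : R := u - 1
  have hx : IsNilpotent x := ⟨2 ^ k, (sub_one_pow_expChar_pow_eq_zero_iff 2 u k).mpr hu.dvd⟩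
  have hxs : x ^ (3 * 2 ^ N) ≠ 0 := u.sub_one_pow_ne_zero_of_le 2 hu (by omega) <|
    calc 3 * 2 ^ N ≤ 2 ^ (N + 2) := by rw [pow_add]; omega
      _ ≤ 2 ^ (k - 1) := Nat.pow_le_pow_right (by norm_num) (by omega)
  obtain ⟨v, hv⟩ := (hx.pow_of_pos (n := 3) (by norm_num)).isUnit_one_add
  refine ⟨v, Commute.units_val_iff.mp ?_, fun hmem => hxs ?_⟩
  · have hxu : Commute x u := (Commute.refl _).sub_left (Commute.one_left _)
    rw [hv]
    exact (Commute.one_left _).add_left (hxu.pow_left 3)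
  have hfin : IsOfFinOrder u := orderOf_pos_iff.mp (by rw [hu]; positivity)
  obtain ⟨n, hn : u ^ n = v ^ 2 ^ N⟩ := hfin.mem_powers_iff_mem_zpowers.mpr hmem
  have hun : (u : R) ^ n - 1 = x ^ (3 * 2 ^ N) := by
    rw [pow_mul, ← Units.val_pow_eq_pow_val, hn, Units.val_pow_eq_pow_val,
      hv, add_pow_expChar_pow_of_commute 2 N (Commute.one_left _), one_pow, add_sub_cancel_left]
  rcases Nat.eq_zero_or_pos n with rfl | hn0
  · rw [← hun, pow_zero, sub_self]
  obtain ⟨r, m, hm, rfl⟩ := Nat.exists_eq_two_pow_mul_odd hn0.ne'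
  obtain ⟨w, hwx, hw⟩ := exists_pow_two_pow_mul_sub_one_eq_mul_unit hx r hm
  have hne : 3 * 2 ^ N ≠ 2 ^ r := fun h =>
    absurd (Nat.prime_three.dvd_of_dvd_pow (h ▸ Nat.dvd_mul_right 3 (2 ^ N) : 3 ∣ 2 ^ r))
      (by norm_num)
  exact hx.pow_eq_zero_of_pow_eq_pow_mul_unit hwx hne (hun ▸ hw)

end

theorem stmt_17_general (G : Type*) [Group G] [Fintype G]
    (h2 : ∃ n : ℕ, Fintype.card G = 2 ^ n)
    (a : G) (N : ℕ)
    (hN : ∀ b ∈ Subgroup.centralizer {a}, b ^ 2 ^ N ∈ Subgroup.zpowers a)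
    (hcase : (N = 0 ∧ 8 ≤ orderOf a) ∨ (N = 1 ∧ 16 ≤ orderOf a) ∨
      (2 ≤ N ∧ 2 ^ (2 * N + 1) ≤ orderOf a)) :
    ¬ RealizableInChar G 2 := by
  rintro ⟨R, _, _, hchar, ⟨φ⟩⟩
  have : CharP R 2 := hchar ▸ ringChar.charP R
  have : Fact (Nat.Prime 2) := ⟨Nat.prime_two⟩
  obtain ⟨n, hcard⟩ := h2
  obtain ⟨k, hk⟩ :=
    IsPGroup.iff_orderOf.mp (IsPGroup.of_card (by rwa [Nat.card_eq_fintype_card])) a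
  have hNk : N + 3 ≤ k := by
    rw [← Nat.pow_le_pow_iff_right (by norm_num : 1 < 2), ← hk]
    rcases hcase with ⟨rfl, h⟩ | ⟨rfl, h⟩ | ⟨hN2, h⟩
    · exact h
    · exact h
    · exact le_trans (Nat.pow_le_pow_right (by norm_num) (by omega)) h
  obtain ⟨v, hvu, hv⟩ := (φ.symm a).exists_commute_pow_two_pow_notMem_zpowers
    (by rwa [MulEquiv.orderOf_eq]) hNk
  have hcent : φ v ∈ Subgroup.centralizer {a} := by
    rw [Subgroup.mem_centralizer_singleton_iff]
    simpa using (hvu.map φ).eq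
  obtain ⟨i, hi⟩ := Subgroup.mem_zpowers_iff.mp (hN _ hcent)
  exact hv ⟨i, φ.injective (by simpa using hi)⟩

/-- Let `G` be a finite 2-group.  Suppose there are `a ∈ G` and `N ∈ ℕ`, where `N` is
the smallest non-negative integer with `b ^ 2^N ∈ ⟨a⟩` for all `b ∈ C_G(a)`, such that
either (i) `N = 0` and `|a| ≥ 8`, (ii) `N = 1` and `|a| ≥ 16`, or (iii) `N ≥ 2` and
`|a| ≥ 2^(2N+1)`.  Then `G` is not realizable in characteristic 2. -/
theorem stmt_17 (G : Type*) [Group G] [Fintype G]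
    (h2 : ∃ n : ℕ, Fintype.card G = 2 ^ n)
    (a : G) (N : ℕ)
    (hN : ∀ b ∈ Subgroup.centralizer {a}, b ^ 2 ^ N ∈ Subgroup.zpowers a)
    (hNmin : ∀ N' : ℕ, (∀ b ∈ Subgroup.centralizer {a},
      b ^ 2 ^ N' ∈ Subgroup.zpowers a) → N ≤ N')
    (hcase : (N = 0 ∧ 8 ≤ orderOf a) ∨ (N = 1 ∧ 16 ≤ orderOf a) ∨
      (2 ≤ N ∧ 2 ^ (2 * N + 1) ≤ orderOf a)) :
    ¬ RealizableInChar G 2 :=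
  stmt_17_general G h2 a N hN hcase
end

section
/- For every $n \geq 4$, the generalized quaternion group $Q_{2^n}$ of order $2^n$ (with presentation $\langle a, b : a^{2^{n-1}} = 1,\ a^{2^{n-2}} = b^2,\ bab^{-1} = a^{-1} \rangle$, i.e., the dicyclic group of order $4 \cdot 2^{n-2}$) is not realizable as the group of units of a finite ring; that is, there is no finite ring $R$ with $R^\times$ isomorphic to $Q_{2^n}$. -/
/-!
In `Q_{16k}` the element `u = a^k` has order 8, each conjugate of `u` is `u` or `u⁻¹`, and the
centre is `{1, a^{4k}}`, of exponent 2. If `Rˣ ≅ Q_{16k}`, then `s = u + u⁻¹` commutes with every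
unit of `R`, so any unit of the form `1 + c` with `c` commuting with all units is central and
squares to `1`. If `2 = 0` in `R`, then `s⁴ = u⁴ + u⁻⁴ = 0`, so `1 + s` is a unit and
`(1 + s)² = 1 + s²` forces `u² + u⁻² = s² = 0`, i.e. `u⁴ = 1`. Otherwise `-1` is a nontrivial
central unit, hence equals `u⁴`, which gives `s² = 2`; now `1 + s` is a unit with inverse `s - 1`,
and `(1 + s)² = 1` forces `2 = 0`.
-/

namespace QuaternionGroup

variable {n : ℕ}

theorem inv_a (i : ZMod (2 * n)) : (a i)⁻¹ = a (-i) :=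
  inv_eq_of_mul_eq_one_right (by simp)

theorem conj_a_eq_or_eq_inv (g : QuaternionGroup n) (i : ZMod (2 * n)) :
    g * a i * g⁻¹ = a i ∨ g * a i * g⁻¹ = (a i)⁻¹ := by
  rw [mul_inv_eq_iff_eq_mul, mul_inv_eq_iff_eq_mul, inv_a]
  rcases g with j | j
  · simp [add_comm]
  · simp

theorem eq_one_or_eq_a_of_mem_center (hn : 1 < n) {g : QuaternionGroup n}
    (hg : g ∈ Subgroup.center (QuaternionGroup n)) : g = 1 ∨ g = a n := by
  have : NeZero n := ⟨by omega⟩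
  rw [Subgroup.mem_center_iff] at hg
  rcases g with i | i
  · have hi : -i = i := by simpa using (hg (xa 0)).symm
    rcases (ZMod.neg_eq_self_iff i).mp hi with h0 | hval
    · simp [h0]
    · right
      rw [← ZMod.natCast_zmod_val i, show i.val = n by omega]
  · have h : i - 1 = i + 1 := by simpa using hg (a 1)
    have h2 : ((2 : ℕ) : ZMod (2 * n)) = 0 := by
      push_cast
      linear_combination -h
    rw [ZMod.natCast_eq_zero_iff] at h2
    have := Nat.le_of_dvd two_pos h2
    omega

theorem sq_eq_one_of_mem_center (hn : 1 < n) {g : QuaternionGroup n}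
    (hg : g ∈ Subgroup.center (QuaternionGroup n)) : g ^ 2 = 1 := by
  rcases eq_one_or_eq_a_of_mem_center hn hg with rfl | rfl
  · exact one_pow 2
  · rw [sq, a_mul_a, ← two_mul, ← a_zero]
    exact congrArg a (by exact_mod_cast ZMod.natCast_self (2 * n))

end QuaternionGroup

section UnitsOfRing

variable {R : Type*} [Ring R]

theorem Units.commute_add_inv_of_conj_eq_or_eq_inv {g u : Rˣ}
    (h : g * u * g⁻¹ = u ∨ g * u * g⁻¹ = u⁻¹) : Commute (g : R) (u + ↑u⁻¹) := by
  have hconj : ((g * u * g⁻¹ : Rˣ) : R) + ↑(g * u * g⁻¹)⁻¹ = g * (u + ↑u⁻¹) * ↑g⁻¹ := by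
    simp only [mul_inv_rev, inv_inv, Units.val_mul, mul_add, add_mul, mul_assoc]
  have hfix : (g : R) * (u + ↑u⁻¹) * ↑g⁻¹ = u + ↑u⁻¹ := by
    rcases h with h | h <;> rw [← hconj, h]
    rw [inv_inv, add_comm]
  exact (Units.mul_inv_eq_iff_eq_mul g).mp hfix

theorem Units.val_add_inv_sq (u : Rˣ) : ((u : R) + ↑u⁻¹) ^ 2 = ↑(u ^ 2) + ↑(u ^ 2)⁻¹ + 2 := by
  have h1 : (u : R) * ↑u⁻¹ = 1 := u.mul_inv
  have h2 : (↑u⁻¹ : R) * u = 1 := u.inv_mul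
  simp only [sq, mul_inv_rev, Units.val_mul, add_mul, mul_add]
  rw [h1, h2, ← one_add_one_eq_two]
  abel

theorem one_add_sq_eq_one (hcenter : ∀ z ∈ Subgroup.center Rˣ, z ^ 2 = 1) {c : R}
    (hc : ∀ g : Rˣ, Commute (g : R) c) (hunit : IsUnit (1 + c)) : (1 + c) ^ 2 = 1 := by
  obtain ⟨v, hv⟩ := hunit
  have hv_center : v ∈ Subgroup.center Rˣ :=
    Subgroup.mem_center_iff.mpr fun g ↦ Units.ext <| by
      rw [Units.val_mul, Units.val_mul, hv]
      exact ((Commute.one_right (g : R)).add_right (hc g)).eq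
  rw [← hv, ← Units.val_pow_eq_pow_val, hcenter v hv_center, Units.val_one]

theorem two_eq_zero_of_sq_eq_two (hcenter : ∀ z ∈ Subgroup.center Rˣ, z ^ 2 = 1) {s : R}
    (hs : ∀ g : Rˣ, Commute (g : R) s) (hs2 : s ^ 2 = 2) : (2 : R) = 0 := by
  have hinv : (1 + s) * (s - 1) = 1 := by
    calc (1 + s) * (s - 1) = s ^ 2 - 1 := by noncomm_ring
      _ = 1 := by rw [hs2]; norm_num
  have hinv' : (s - 1) * (1 + s) = 1 := by
    calc (s - 1) * (1 + s) = s ^ 2 - 1 := by noncomm_ring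
      _ = 1 := by rw [hs2]; norm_num
  have hsq := one_add_sq_eq_one hcenter hs ⟨⟨1 + s, s - 1, hinv, hinv'⟩, rfl⟩
  have hexpand := (Commute.one_left s).add_sq
  rw [hsq, hs2, one_pow, mul_one, add_assoc] at hexpand
  have htwo : 2 * (1 + s) = 0 := by
    rw [mul_add, mul_one, add_comm]
    exact left_eq_add.mp hexpand
  calc (2 : R) = 2 * (1 + s) * (s - 1) := by rw [mul_assoc, hinv, mul_one]
    _ = 0 := by rw [htwo, zero_mul]

theorem two_eq_zero_of_pow_four_eq_neg_one (hcenter : ∀ z ∈ Subgroup.center Rˣ, z ^ 2 = 1)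
    {u : Rˣ} (hu : ∀ g : Rˣ, Commute (g : R) (u + ↑u⁻¹)) (hu4 : u ^ 4 = -1) : (2 : R) = 0 := by
  have hinv : (u ^ 2)⁻¹ = -u ^ 2 :=
    inv_eq_of_mul_eq_one_right (by rw [mul_neg, ← pow_add, hu4, neg_neg])
  refine two_eq_zero_of_sq_eq_two hcenter hu ?_
  rw [Units.val_add_inv_sq, hinv, Units.val_neg, add_neg_cancel, zero_add]

theorem pow_four_eq_one_of_two_eq_zero (hcenter : ∀ z ∈ Subgroup.center Rˣ, z ^ 2 = 1)
    (h2 : (2 : R) = 0) {u : Rˣ} (hu : ∀ g : Rˣ, Commute (g : R) (u + ↑u⁻¹)) (hu8 : u ^ 8 = 1) :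
    u ^ 4 = 1 := by
  set c : R := u + ↑u⁻¹
  have hc2 : c ^ 2 = ↑(u ^ 2) + ↑(u ^ 2)⁻¹ := by
    rw [Units.val_add_inv_sq, h2, add_zero]
  have hu4_inv : (u ^ 4)⁻¹ = u ^ 4 :=
    inv_eq_of_mul_eq_one_right (by rw [← pow_add, hu8])
  have hc4 : c ^ 4 = 0 := by
    rw [show 4 = 2 * 2 from rfl, pow_mul, hc2, Units.val_add_inv_sq, ← pow_mul, hu4_inv,
      ← two_mul, h2, zero_mul, zero_add]
  have hsq := one_add_sq_eq_one hcenter hu (IsNilpotent.isUnit_one_add ⟨4, hc4⟩)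
  have hc2_zero : c ^ 2 = 0 := by
    calc c ^ 2 = (1 + c) ^ 2 - 1 - 2 * c := by noncomm_ring
      _ = 0 := by rw [hsq, h2, sub_self, zero_mul, sub_zero]
  have hneg : -((u ^ 2 : Rˣ) : R) = ↑(u ^ 2) := by
    rw [neg_eq_iff_add_eq_zero, ← two_mul, h2, zero_mul]
  have hinv : (u ^ 2)⁻¹ = u ^ 2 := by
    have hsum : ((u ^ 2 : Rˣ) : R) + ↑(u ^ 2)⁻¹ = 0 := hc2 ▸ hc2_zero
    exact Units.ext ((neg_eq_of_add_eq_zero_right hsum).symm.trans hneg)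
  have h1 := mul_inv_cancel (u ^ 2)
  rwa [hinv, ← pow_add] at h1

end UnitsOfRing

open QuaternionGroup in
theorem isEmpty_units_mulEquiv_quaternionGroup (R : Type*) [Ring R] {k : ℕ} (hk : 0 < k) :
    IsEmpty (Rˣ ≃* QuaternionGroup (4 * k)) := by
  refine ⟨fun φ ↦ ?_⟩
  have hcenter : ∀ z ∈ Subgroup.center Rˣ, z ^ 2 = 1 := fun z hz ↦ φ.injective <| by
    rw [map_pow, map_one]
    exact sq_eq_one_of_mem_center (by omega) (MulEquivClass.apply_mem_center φ hz)
  set u : Rˣ := φ.symm (a k)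
  have hu : ∀ g : Rˣ, Commute (g : R) (u + ↑u⁻¹) := fun g ↦ by
    refine Units.commute_add_inv_of_conj_eq_or_eq_inv ?_
    have hconj : g * u * g⁻¹ = φ.symm (φ g * a k * (φ g)⁻¹) := by
      rw [map_mul, map_mul, map_inv, φ.symm_apply_apply]
    rcases conj_a_eq_or_eq_inv (φ g) k with h | h <;> rw [hconj, h]
    · exact .inl rfl
    · exact .inr (map_inv _ _)
  have hφu : ∀ j : ℕ, φ (u ^ j) = a 1 ^ (k * j) := fun j ↦ by
    rw [map_pow, φ.apply_symm_apply, ← a_one_pow, pow_mul]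
  have hu4 : u ^ 4 ≠ 1 := by
    rw [← φ.injective.ne_iff, hφu, map_one]
    exact pow_ne_one_of_lt_orderOf (by omega) (by rw [orderOf_a_one]; omega)
  by_cases h2 : (2 : R) = 0
  · refine hu4 (pow_four_eq_one_of_two_eq_zero hcenter h2 hu (φ.injective ?_))
    rw [hφu, map_one, show k * 8 = 2 * (4 * k) by ring, a_one_pow_n]
  · refine h2 (two_eq_zero_of_pow_four_eq_neg_one hcenter hu (φ.injective ?_))
    have hneg_one : (-1 : Rˣ) ≠ 1 := fun h ↦ h2 <| by
      have h' := congrArg Units.val h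
      rw [Units.val_neg, Units.val_one, neg_eq_iff_add_eq_zero, one_add_one_eq_two] at h'
      exact h'
    have hneg_one_center : (-1 : Rˣ) ∈ Subgroup.center Rˣ :=
      Subgroup.mem_center_iff.mpr fun g ↦ (Commute.neg_one_right g).eq
    rcases eq_one_or_eq_a_of_mem_center (by omega)
        (MulEquivClass.apply_mem_center φ hneg_one_center) with h | h
    · exact absurd (φ.injective (h.trans (map_one φ).symm)) hneg_one
    · rw [h, hφu, a_one_pow, mul_comm]

/-- For `n ≥ 4`, the generalized quaternion group `Q_{2^n}` (the dicyclic group of order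
`4 * 2^(n-2) = 2^n`) is not the group of units of any finite ring. -/
theorem stmt_19 (n : ℕ) (hn : 4 ≤ n) :
    ¬ ∃ (R : Type u) (_ : Ring R) (_ : Fintype R),
      Nonempty (Rˣ ≃* QuaternionGroup (2 ^ (n - 2))) := by
  rintro ⟨R, _, _, ⟨φ⟩⟩
  have hpow : 2 ^ (n - 2) = 4 * 2 ^ (n - 4) := by
    rw [show n - 2 = 2 + (n - 4) by omega, pow_add]; rfl
  rw [hpow] at φ
  exact (isEmpty_units_mulEquiv_quaternionGroup R (by positivity)).false φ
end
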